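/- arXiv:2304.08712 — 2 statements merged into one kernel-verified Lean document; each statement's English description precedes it below -/
import Mathlib

section
/- Let Q be a class of distributions over ℕ and Q' a finite class such that for every q ∈ Q there is p ∈ Q' with TV(p,q) ≤ ε/4. If A is a 3-agnostic PAC learner for Q' with sample complexity m'(ε,δ), then A is a 3-agnostic PAC learner for Q with sample complexity m(ε,δ) ≤ m'(ε/4, δ) + c for an appropriate adjustment of the accuracy parameter; in particular, any class of distributions admitting finite ε-covers in TV distance for every ε > 0 is 3-agnostic PAC learnable. -/
open MeasureTheory Filter

/-- Total variation distance between two distributions over `ℕ`. -/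
noncomputable def tv (p q : PMF ℕ) : ℝ :=
  ⨆ A : Set ℕ, |(p.toMeasure A).toReal - (q.toMeasure A).toReal|

/-- The distribution of an i.i.d. sample of size `m` drawn from `q`. -/
noncomputable def iidSample {α : Type*} [MeasurableSpace α] (q : PMF α) (m : ℕ) :
    Measure (Fin m → α) :=
  Measure.pi fun _ => q.toMeasure

/-- The mixture `(1 - η) δ₀ + η U_A` of the point mass at `0` and the uniform
distribution on the finite set `A` (junk values when `η ∉ [0,1]` or `A = ∅`). -/
noncomputable def mixPMF (η : ℝ) (A : Finset ℕ) : PMF ℕ :=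
  (PMF.bernoulli (min (Real.toNNReal η) 1) (min_le_right _ _)).bind fun b =>
    if h : b = true ∧ A.Nonempty then PMF.uniformOfFinset A h.2 else PMF.pure 0

/-- Realizable PAC learnability of a class of distributions over `ℕ` in total
variation distance, witnessed by the learner `A` and sample complexity `mQ`. -/
def RealizablePAC (Q : Set (PMF ℕ)) (A : ∀ m : ℕ, (Fin m → ℕ) → PMF ℕ)
    (mQ : ℝ → ℝ → ℕ) : Prop :=
  ∀ ε δ : ℝ, 0 < ε → ε < 1 → 0 < δ → δ < 1 → ∀ q ∈ Q, ∀ m ≥ mQ ε δ,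
    (iidSample q m) {S | ε < tv (A m S) q} ≤ ENNReal.ofReal δ

/-- 3-agnostic PAC learnability of a class of distributions over `ℕ` in total
variation distance, witnessed by the learner `A` and sample complexity `mQ`. -/
def Agnostic3PAC (Q : Set (PMF ℕ)) (A : ∀ m : ℕ, (Fin m → ℕ) → PMF ℕ)
    (mQ : ℝ → ℝ → ℕ) : Prop :=
  ∀ ε δ : ℝ, 0 < ε → 0 < δ → δ < 1 → ∀ P : PMF ℕ, ∀ m ≥ mQ ε δ,
    ENNReal.ofReal (1 - δ) ≤
      (iidSample P m) {S | tv (A m S) P ≤ 3 * (⨅ q : Q, tv q.1 P) + ε}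

/-!
Part (1) is the triangle inequality: every member of `Q` is `ε/4`-close to a member of `Q'`, so
the best distance to `P` achievable in `Q'` exceeds the one achievable in `Q` by at most `ε/4`.

For (2), the learner is the Scheffé–Yatracos minimum-distance estimate over a finite cover `T`:
among the members of `T` it picks one whose masses of the Scheffé sets `{n | r n < p n}`
(`p, r ∈ T`) are closest to their empirical frequencies. The Scheffé set of two candidates
realises their TV distance, so if every empirical frequency is within `Δ` of the truth the
estimate is within `3 · min_{q ∈ T} TV(q, P) + 2Δ` of `P`; Chebyshev's inequality and a union bound
over the `|T|²` Scheffé sets make this happen with probability `≥ 1 - δ`. As the learner may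
depend on the sample size `m` only, it uses the cover of resolution `1/(k+1)` with the largest
`k ≤ m` such that `k · |T|² ≤ m`.
-/

lemma PMF.toMeasure_real_le_of_le_on {α : Type*} [MeasurableSpace α]
    [MeasurableSingletonClass α] {p q : PMF α} {s : Set α} (h : ∀ x ∈ s, p x ≤ q x) :
    p.toMeasure.real s ≤ q.toMeasure.real s := by
  refine ENNReal.toReal_mono (measure_ne_top _ _) ?_
  simp only [PMF.toMeasure_apply_eq_tsum]
  exact ENNReal.tsum_le_tsum fun x => Set.indicator_rel_indicator le_rfl (h x)

lemma tv_eq_iSup_measureReal (p q : PMF ℕ) :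
    tv p q = ⨆ A : Set ℕ, |p.toMeasure.real A - q.toMeasure.real A| := rfl

lemma abs_measureReal_sub_le_tv (p q : PMF ℕ) (A : Set ℕ) :
    |p.toMeasure.real A - q.toMeasure.real A| ≤ tv p q :=
  le_ciSup (f := fun A => |p.toMeasure.real A - q.toMeasure.real A|)
    ⟨1, Set.forall_mem_range.2 fun _ => abs_sub_le_of_nonneg_of_le measureReal_nonneg
      measureReal_le_one measureReal_nonneg measureReal_le_one⟩ A

lemma tv_nonneg (p q : PMF ℕ) : 0 ≤ tv p q :=
  (abs_nonneg _).trans (abs_measureReal_sub_le_tv p q ∅)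

lemma tv_le_add (p q r : PMF ℕ) : tv p r ≤ tv p q + tv q r :=
  ciSup_le fun A => (abs_sub_le _ (q.toMeasure.real A) _).trans <|
    add_le_add (abs_measureReal_sub_le_tv p q A) (abs_measureReal_sub_le_tv q r A)

def scheffeSet (p q : PMF ℕ) : Set ℕ := {n | q n < p n}

lemma measureReal_sub_le_scheffeSet (p q : PMF ℕ) (A : Set ℕ) :
    p.toMeasure.real A - q.toMeasure.real A ≤
      p.toMeasure.real (scheffeSet p q) - q.toMeasure.real (scheffeSet p q) := by
  set B := scheffeSet p q
  have hout : p.toMeasure.real (A \ B) ≤ q.toMeasure.real (A \ B) :=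
    PMF.toMeasure_real_le_of_le_on fun n hn => not_lt.1 hn.2
  have hin : q.toMeasure.real (B \ A) ≤ p.toMeasure.real (B \ A) :=
    PMF.toMeasure_real_le_of_le_on fun n hn => hn.1.le
  have hB : MeasurableSet B := .of_discrete
  have hA : MeasurableSet A := .of_discrete
  rw [← measureReal_inter_add_sdiff (μ := p.toMeasure) (s := A) hB,
    ← measureReal_inter_add_sdiff (μ := q.toMeasure) (s := A) hB,
    ← measureReal_inter_add_sdiff (μ := p.toMeasure) (s := B) hA,
    ← measureReal_inter_add_sdiff (μ := q.toMeasure) (s := B) hA, Set.inter_comm B A]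
  linarith

lemma tv_eq_scheffeSet (p q : PMF ℕ) :
    tv p q = p.toMeasure.real (scheffeSet p q) - q.toMeasure.real (scheffeSet p q) := by
  rw [tv_eq_iSup_measureReal]
  refine le_antisymm (ciSup_le fun A => abs_sub_le_iff.2 ⟨measureReal_sub_le_scheffeSet p q A, ?_⟩)
    ((le_abs_self _).trans (abs_measureReal_sub_le_tv p q _))
  have := measureReal_sub_le_scheffeSet p q Aᶜ
  rw [measureReal_compl .of_discrete, measureReal_compl .of_discrete, probReal_univ,
    probReal_univ] at this
  linarith

lemma iInf_tv_le_iInf_tv_add_of_cover {Q T : Set (PMF ℕ)} (hQ : Q.Nonempty) {η : ℝ}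
    (hT : ∀ q ∈ Q, ∃ p ∈ T, tv p q ≤ η) (P : PMF ℕ) :
    (⨅ p : T, tv p.1 P) ≤ (⨅ q : Q, tv q.1 P) + η := by
  have : Nonempty Q := hQ.to_subtype
  suffices (⨅ p : T, tv p.1 P) - η ≤ ⨅ q : Q, tv q.1 P by linarith
  refine le_ciInf fun ⟨q, hq⟩ => ?_
  obtain ⟨p, hp, hpq⟩ := hT q hq
  have : (⨅ p : T, tv p.1 P) ≤ tv p P :=
    ciInf_le ⟨0, Set.forall_mem_range.2 fun p : T => tv_nonneg p.1 P⟩ ⟨p, hp⟩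
  linarith [tv_le_add p q P]

noncomputable def yatracosClass (T : Finset (PMF ℕ)) : Finset (Set ℕ) :=
  (T ×ˢ T).image fun pr => scheffeSet pr.1 pr.2

lemma scheffeSet_mem_yatracosClass {T : Finset (PMF ℕ)} {p r : PMF ℕ} (hp : p ∈ T)
    (hr : r ∈ T) : scheffeSet p r ∈ yatracosClass T :=
  Finset.mem_image.2 ⟨(p, r), Finset.mem_product.2 ⟨hp, hr⟩, rfl⟩

lemma card_yatracosClass_le (T : Finset (PMF ℕ)) : (yatracosClass T).card ≤ T.card ^ 2 :=
  Finset.card_image_le.trans (by rw [Finset.card_product, sq])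

section MinimumDistance

variable (T : Finset (PMF ℕ)) (hT : T.Nonempty) (h : Set ℕ → ℝ)

noncomputable def yatracosScore (q : PMF ℕ) : ℝ :=
  (yatracosClass T).sup' ((hT.product hT).image _) fun B => |q.toMeasure.real B - h B|

noncomputable def minDistanceEstimate : PMF ℕ :=
  (T.exists_min_image (yatracosScore T hT h) hT).choose

lemma minDistanceEstimate_mem : minDistanceEstimate T hT h ∈ T :=
  (T.exists_min_image (yatracosScore T hT h) hT).choose_spec.1

variable {T h}

lemma yatracosScore_minDistanceEstimate_le {q : PMF ℕ} (hq : q ∈ T) :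
    yatracosScore T hT h (minDistanceEstimate T hT h) ≤ yatracosScore T hT h q :=
  (T.exists_min_image (yatracosScore T hT h) hT).choose_spec.2 q hq

lemma abs_measureReal_sub_le_yatracosScore {B : Set ℕ} (hB : B ∈ yatracosClass T)
    (q : PMF ℕ) : |q.toMeasure.real B - h B| ≤ yatracosScore T hT h q :=
  Finset.le_sup' (fun B => |q.toMeasure.real B - h B|) hB

lemma yatracosScore_le {P : PMF ℕ} {Δ : ℝ}
    (hΔ : ∀ B ∈ yatracosClass T, |h B - P.toMeasure.real B| ≤ Δ) (q : PMF ℕ) :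
    yatracosScore T hT h q ≤ tv q P + Δ :=
  Finset.sup'_le _ _ fun B hB => (abs_sub_le _ (P.toMeasure.real B) _).trans <|
    add_le_add (abs_measureReal_sub_le_tv q P B) (abs_sub_comm (h B) _ ▸ hΔ B hB)

lemma tv_minDistanceEstimate_le {P : PMF ℕ} {Δ : ℝ}
    (hΔ : ∀ B ∈ yatracosClass T, |h B - P.toMeasure.real B| ≤ Δ) {q : PMF ℕ} (hq : q ∈ T) :
    tv (minDistanceEstimate T hT h) P ≤ 3 * tv q P + 2 * Δ := by
  set qhat := minDistanceEstimate T hT h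
  have hB := scheffeSet_mem_yatracosClass (minDistanceEstimate_mem T hT h) hq
  have hqhatq : tv qhat q ≤ yatracosScore T hT h qhat + yatracosScore T hT h q := by
    rw [tv_eq_scheffeSet]
    have h₁ := abs_measureReal_sub_le_yatracosScore (h := h) hT hB qhat
    have h₂ := abs_measureReal_sub_le_yatracosScore (h := h) hT hB q
    rw [abs_le] at h₁ h₂
    linarith
  linarith [yatracosScore_minDistanceEstimate_le hT (h := h) hq, yatracosScore_le hT hΔ q,
    tv_le_add qhat q P]

lemma tv_minDistanceEstimate_le_iInf {P : PMF ℕ} {Δ : ℝ}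
    (hΔ : ∀ B ∈ yatracosClass T, |h B - P.toMeasure.real B| ≤ Δ) :
    tv (minDistanceEstimate T hT h) P ≤ 3 * (⨅ q : (T : Set (PMF ℕ)), tv q.1 P) + 2 * Δ := by
  obtain ⟨q₀, hq₀, hmin⟩ := T.exists_min_image (fun q => tv q P) hT
  have : Nonempty (T : Set (PMF ℕ)) := ⟨⟨q₀, hq₀⟩⟩
  have : tv q₀ P ≤ ⨅ q : (T : Set (PMF ℕ)), tv q.1 P := le_ciInf fun q => hmin q.1 q.2
  linarith [tv_minDistanceEstimate_le hT hΔ hq₀]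

end MinimumDistance

section EmpiricalFrequency

open ProbabilityTheory

variable {α : Type*} [MeasurableSpace α] (μ : Measure α) [IsProbabilityMeasure μ] {B : Set α}

noncomputable def empiricalFreq {m : ℕ} (S : Fin m → α) (B : Set α) : ℝ :=
  (∑ i, B.indicator 1 (S i)) / m

lemma variance_indicator_one_le (hB : MeasurableSet B) : Var[B.indicator 1; μ] ≤ 1 / 4 := by
  have hbound : ∀ᵐ x ∂μ, B.indicator (1 : α → ℝ) x ∈ Set.Icc 0 1 :=
    ae_of_all _ fun x => by by_cases hx : x ∈ B <;> simp [hx]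
  have := variance_le_sub_mul_sub hbound (measurable_one.indicator hB).aemeasurable
  nlinarith [sq_nonneg (μ[B.indicator (1 : α → ℝ)] - 1 / 2)]

lemma integral_sum_indicator_one_pi (hB : MeasurableSet B) (m : ℕ) :
    ∫ S, ∑ i, B.indicator (1 : α → ℝ) (S i) ∂Measure.pi (fun _ : Fin m => μ) = m * μ.real B := by
  have hX : MemLp (B.indicator (1 : α → ℝ)) 2 μ :=
    memLp_indicator_const 2 hB 1 (Or.inr (measure_ne_top _ _))
  rw [integral_finsetSum Finset.univ (f := fun i (S : Fin m → α) => B.indicator (1 : α → ℝ) (S i))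
    fun i _ =>
    (hX.comp_measurePreserving (measurePreserving_eval _ i)).integrable one_le_two]
  simp [integral_comp_eval (μ := fun _ : Fin m => μ) hX.1, integral_indicator_one hB]

lemma variance_sum_indicator_one_pi_le (hB : MeasurableSet B) (m : ℕ) :
    Var[fun S => ∑ i, B.indicator (1 : α → ℝ) (S i); Measure.pi (fun _ : Fin m => μ)] ≤ m / 4 := by
  have hX : MemLp (B.indicator (1 : α → ℝ)) 2 μ :=
    memLp_indicator_const 2 hB 1 (Or.inr (measure_ne_top _ _))
  rw [← Finset.sum_fn, variance_sum_pi fun _ => hX, Finset.sum_const, Finset.card_univ,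
    Fintype.card_fin, nsmul_eq_mul]
  linarith [mul_le_mul_of_nonneg_left (variance_indicator_one_le μ hB) m.cast_nonneg]

lemma measure_le_abs_empiricalFreq_sub_le (hB : MeasurableSet B) {m : ℕ} (hm : 0 < m) {t : ℝ}
    (ht : 0 < t) :
    Measure.pi (fun _ : Fin m => μ) {S | t ≤ |empiricalFreq S B - μ.real B|} ≤
      ENNReal.ofReal (1 / (4 * m * t ^ 2)) := by
  set Y : (Fin m → α) → ℝ := fun S => ∑ i, B.indicator 1 (S i)
  have hm' : (0 : ℝ) < m := Nat.cast_pos.2 hm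
  have hX : MemLp (B.indicator (1 : α → ℝ)) 2 μ :=
    memLp_indicator_const 2 hB 1 (Or.inr (measure_ne_top _ _))
  have hY : MemLp Y 2 (Measure.pi fun _ => μ) :=
    memLp_finsetSum _ fun i _ => hX.comp_measurePreserving (measurePreserving_eval _ i)
  have hsub : {S | t ≤ |empiricalFreq S B - μ.real B|} ⊆
      {S | m * t ≤ |Y S - (Measure.pi fun _ => μ)[Y]|} := by
    intro S hS
    have : empiricalFreq S B - μ.real B = (Y S - (Measure.pi fun _ => μ)[Y]) / m := by
      rw [integral_sum_indicator_one_pi μ hB, empiricalFreq, sub_div,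
        mul_div_cancel_left₀ _ hm'.ne']
    simp only [Set.mem_ofPred_eq, this, abs_div, Nat.abs_cast, le_div_iff₀ hm'] at hS ⊢
    linarith
  calc _ ≤ _ := measure_mono hsub
    _ ≤ ENNReal.ofReal (Var[Y; Measure.pi fun _ => μ] / (m * t) ^ 2) :=
      meas_ge_le_variance_div_sq hY (by positivity)
    _ ≤ ENNReal.ofReal ((m / 4) / (m * t) ^ 2) :=
      ENNReal.ofReal_le_ofReal <| div_le_div_of_nonneg_right
        (variance_sum_indicator_one_pi_le μ hB m) (by positivity)
    _ = ENNReal.ofReal (1 / (4 * m * t ^ 2)) := by congr 1; field_simp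

lemma ofReal_one_sub_le_measure_forall_abs_empiricalFreq_sub_lt {𝓑 : Finset (Set α)}
    (h𝓑 : ∀ B ∈ 𝓑, MeasurableSet B) {m : ℕ} (hm : 0 < m) {t δ : ℝ} (ht : 0 < t)
    (hδ : 𝓑.card / (4 * m * t ^ 2) ≤ δ) :
    ENNReal.ofReal (1 - δ) ≤
      Measure.pi (fun _ : Fin m => μ) {S | ∀ B ∈ 𝓑, |empiricalFreq S B - μ.real B| < t} := by
  set ν := Measure.pi fun _ : Fin m => μ
  set bad : Set α → Set (Fin m → α) := fun B => {S | t ≤ |empiricalFreq S B - μ.real B|}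
  have hbad : ν (⋃ B ∈ 𝓑, bad B) ≤ ENNReal.ofReal δ :=
    calc ν (⋃ B ∈ 𝓑, bad B) ≤ ∑ B ∈ 𝓑, ν (bad B) := measure_biUnion_finset_le _ _
      _ ≤ ∑ _B ∈ 𝓑, ENNReal.ofReal (1 / (4 * m * t ^ 2)) := Finset.sum_le_sum fun B hB =>
          measure_le_abs_empiricalFreq_sub_le μ (h𝓑 B hB) hm ht
      _ = ENNReal.ofReal (𝓑.card / (4 * m * t ^ 2)) := by
          rw [← ENNReal.ofReal_sum_of_nonneg fun _ _ => by positivity, Finset.sum_const,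
            nsmul_eq_mul, mul_one_div]
      _ ≤ ENNReal.ofReal δ := ENNReal.ofReal_le_ofReal hδ
  have hcover :
      Set.univ ⊆ {S | ∀ B ∈ 𝓑, |empiricalFreq S B - μ.real B| < t} ∪ ⋃ B ∈ 𝓑, bad B := by
    intro S _
    by_cases hS : ∀ B ∈ 𝓑, |empiricalFreq S B - μ.real B| < t
    · exact Or.inl hS
    · push Not at hS
      obtain ⟨B, hB, hle⟩ := hS
      exact Or.inr (Set.mem_biUnion hB hle)
  have hδ₀ : 0 ≤ δ := le_trans (by positivity) hδ
  rw [ENNReal.ofReal_sub _ hδ₀, ENNReal.ofReal_one, tsub_le_iff_left]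
  calc 1 = ν Set.univ := measure_univ.symm
    _ ≤ _ := (measure_mono hcover).trans (measure_union_le _ _)
    _ ≤ _ := by rw [add_comm]; gcongr

end EmpiricalFrequency

section CoverLearner

variable (C : ℕ → Finset (PMF ℕ))

noncomputable def coverIndex (m : ℕ) : ℕ :=
  Nat.findGreatest (fun k => k * (C k).card ^ 2 ≤ m) m

noncomputable def coverLearner (hC : ∀ k, (C k).Nonempty) (m : ℕ) (S : Fin m → ℕ) : PMF ℕ :=
  minDistanceEstimate (C (coverIndex C m)) (hC _) (empiricalFreq S)

-- `4 / (ε² δ)` pays for the union bound over the Scheffé sets at accuracy `ε / 4`, and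
-- `6 / ε` makes the cover resolution cost `3 / (k + 1) ≤ ε / 2`.
noncomputable def requiredCoverIndex (ε δ : ℝ) : ℕ :=
  max ⌈4 / (ε ^ 2 * δ)⌉₊ ⌈6 / ε⌉₊

lemma le_of_requiredCoverIndex_le {ε δ : ℝ} {k : ℕ} (hk : requiredCoverIndex ε δ ≤ k) :
    4 / (ε ^ 2 * δ) ≤ k ∧ 6 / ε ≤ k :=
  ⟨(Nat.le_ceil _).trans (Nat.cast_le.2 ((le_max_left _ _).trans hk)),
    (Nat.le_ceil _).trans (Nat.cast_le.2 ((le_max_right _ _).trans hk))⟩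

noncomputable def coverSampleComplexity (ε δ : ℝ) : ℕ :=
  requiredCoverIndex ε δ * (C (requiredCoverIndex ε δ)).card ^ 2

variable {C}

lemma le_mul_card_sq (hC : ∀ k, (C k).Nonempty) (k : ℕ) : k ≤ k * (C k).card ^ 2 :=
  Nat.le_mul_of_pos_right k (pow_pos (hC k).card_pos 2)

lemma le_coverIndex (hC : ∀ k, (C k).Nonempty) {K m : ℕ} (hK : K * (C K).card ^ 2 ≤ m) :
    K ≤ coverIndex C m :=
  Nat.le_findGreatest ((le_mul_card_sq hC K).trans hK) hK

lemma coverIndex_mul_card_sq_le (hC : ∀ k, (C k).Nonempty) {K m : ℕ}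
    (hK : K * (C K).card ^ 2 ≤ m) : coverIndex C m * (C (coverIndex C m)).card ^ 2 ≤ m :=
  Nat.findGreatest_spec (P := fun k => k * (C k).card ^ 2 ≤ m) ((le_mul_card_sq hC K).trans hK) hK

lemma agnostic3PAC_coverLearner (hC : ∀ k, (C k).Nonempty) {Q : Set (PMF ℕ)} (hQ : Q.Nonempty)
    (hcov : ∀ k : ℕ, ∀ q ∈ Q, ∃ p ∈ C k, tv p q ≤ 1 / (k + 1)) :
    Agnostic3PAC Q (coverLearner C hC) (coverSampleComplexity C) := by
  intro ε δ hε hδ _ P m hm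
  set k := coverIndex C m
  set T := C k
  obtain ⟨hk₄, hk₆⟩ := le_of_requiredCoverIndex_le (le_coverIndex hC hm)
  have hkm : k * T.card ^ 2 ≤ m := coverIndex_mul_card_sq_le hC hm
  have hk : (0 : ℝ) < k := (by positivity : (0 : ℝ) < 6 / ε).trans_le hk₆
  have hT : (1 : ℝ) ≤ T.card := Nat.one_le_cast.2 (hC k).card_pos
  have hkm' : (k : ℝ) * T.card ^ 2 ≤ m := by exact_mod_cast hkm
  have hm₀ : 0 < m := (Nat.cast_pos.1 hk).trans_le ((le_mul_card_sq hC k).trans hkm)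
  have h𝓑 : ((yatracosClass T).card : ℝ) ≤ T.card ^ 2 := by
    exact_mod_cast card_yatracosClass_le T
  have hbudget : ((yatracosClass T).card : ℝ) / (4 * m * (ε / 4) ^ 2) ≤ δ := by
    rw [div_le_iff₀ (by positivity)]
    rw [div_le_iff₀ (by positivity)] at hk₄
    nlinarith
  refine (ofReal_one_sub_le_measure_forall_abs_empiricalFreq_sub_lt P.toMeasure
    (fun _ _ => .of_discrete) hm₀ (by positivity) hbudget).trans (measure_mono fun S hS => ?_)
  have hest := tv_minDistanceEstimate_le_iInf (hC k) fun B hB => (hS B hB).le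
  have hinf := iInf_tv_le_iInf_tv_add_of_cover hQ (hcov k) P
  have hres : 3 * (1 / ((k : ℝ) + 1)) ≤ ε / 2 := by
    rw [div_le_iff₀ hε] at hk₆
    rw [mul_one_div, div_le_div_iff₀ (by positivity) two_pos]
    linarith
  change tv (minDistanceEstimate T (hC k) (empiricalFreq S)) P ≤ _
  linarith

end CoverLearner

/-- Learning via finite covers: (1) a 3-agnostic learner for a finite
`(ε/4)`-cover `Q'` of `Q`, run with accuracy `ε/4`, is a 3-agnostic learner
for `Q` with accuracy `ε`; (2) hence any class of distributions admitting a
finite `ε`-cover in TV distance for every `ε > 0` is 3-agnostic PAC learnable. -/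
theorem learnable_via_finite_covers (Q : Set (PMF ℕ)) (hQ : Q.Nonempty) :
    (∀ (Q' : Finset (PMF ℕ)) (A : ∀ m : ℕ, (Fin m → ℕ) → PMF ℕ)
        (m' : ℝ → ℝ → ℕ) (ε : ℝ), 0 < ε →
      Agnostic3PAC ↑Q' A m' →
      (∀ q ∈ Q, ∃ p ∈ Q', tv p q ≤ ε / 4) →
      ∀ δ : ℝ, 0 < δ → δ < 1 → ∀ P : PMF ℕ, ∀ m ≥ m' (ε / 4) δ,
        ENNReal.ofReal (1 - δ) ≤
          (iidSample P m) {S | tv (A m S) P ≤ 3 * (⨅ q : Q, tv q.1 P) + ε}) ∧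
    ((∀ ε : ℝ, 0 < ε → ∃ Q' : Finset (PMF ℕ), ∀ q ∈ Q, ∃ p ∈ Q', tv p q ≤ ε) →
      ∃ A mQ, Agnostic3PAC Q A mQ) := by
  refine ⟨fun Q' A m' ε hε hA hcov δ hδ hδ1 P m hm => ?_, fun hcovers => ?_⟩
  · refine (hA (ε / 4) δ (by positivity) hδ hδ1 P m hm).trans (measure_mono fun S hS => ?_)
    have := iInf_tv_le_iInf_tv_add_of_cover (T := Q') hQ hcov P
    simp only [Set.mem_ofPred_eq] at hS ⊢
    linarith
  · choose C hC using fun k : ℕ => hcovers (1 / ((k : ℝ) + 1)) (by positivity)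
    have hCne : ∀ k, (C k).Nonempty := fun k =>
      let ⟨q, hq⟩ := hQ
      let ⟨p, hp, _⟩ := hC k q hq
      ⟨p, hp⟩
    exact ⟨_, _, agnostic3PAC_coverLearner hCne hQ hC⟩
end

section
/- There exists a countable family {H_k : k ∈ ℕ} of classes of distributions over ℕ and a single learnable class H₀ = {δ₀} such that: (a) no H_k is PAC learnable in total variation distance; (b) for each k, every q ∈ H_k satisfies TV(δ₀, q) ≤ 1/k (so H₀ is a (1/k)-approximation of H_k); and (c) 1/k → 0. -/
open MeasureTheory Filter

/-!
The hard instances are the mixtures `(1 - η) δ₀ + η U_A` in which `A` picks one point of each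
of the `T` pairs `{2i+1, 2i+2}`, so they are indexed by the cube `f : Fin T → Bool` (Assouad's
method). A sample of size `m` misses the `i`-th pair with probability `(1 - η/T)^m`, and on such
samples the instances `f` and `f` with its `i`-th bit flipped are indistinguishable, while any
output is at `ℓ¹`-distance at least `2η/T` on that pair from one of them. Since TV dominates half
the `ℓ¹` distance, summing over the pairs and averaging over the cube produces, for `T = 2m + 1`,
an instance with expected TV error at least `η/4`, hence error above `η/8` with probability at
least `η/8`, however large `m` is. Every instance is within `η` of `δ₀` in TV.
-/

open Finset Function

theorem abs_sub_toReal_toMeasure_le_one (p q : PMF ℕ) (C : Set ℕ) :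
    |(p.toMeasure C).toReal - (q.toMeasure C).toReal| ≤ 1 :=
  abs_sub_le_of_nonneg_of_le ENNReal.toReal_nonneg measureReal_le_one ENNReal.toReal_nonneg
    measureReal_le_one

theorem abs_sub_le_tv (p q : PMF ℕ) (C : Set ℕ) :
    |(p.toMeasure C).toReal - (q.toMeasure C).toReal| ≤ tv p q :=
  le_ciSup ⟨1, Set.forall_mem_range.2 (abs_sub_toReal_toMeasure_le_one p q)⟩ C

theorem tv_le_one (p q : PMF ℕ) : tv p q ≤ 1 :=
  ciSup_le (abs_sub_toReal_toMeasure_le_one p q)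

theorem tv_self (p : PMF ℕ) : tv p p = 0 := by
  simp [tv]

theorem tv_comm (p q : PMF ℕ) : tv p q = tv q p := by
  simp only [tv, abs_sub_comm]

theorem tv_pure_le (a : ℕ) (q : PMF ℕ) : tv (PMF.pure a) q ≤ 1 - (q a).toReal := by
  refine ciSup_le fun C => ?_
  have hqa : q.toMeasure.real {a} = (q a).toReal := by
    rw [measureReal_def, q.toMeasure_apply_singleton a (measurableSet_singleton a)]
  rw [PMF.toMeasure_pure_apply _ _ MeasurableSet.of_discrete, ← measureReal_def, ← hqa]
  by_cases ha : a ∈ C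
  · have h₁ : q.toMeasure.real {a} ≤ q.toMeasure.real C :=
      measureReal_mono (Set.singleton_subset_iff.2 ha)
    have h₂ : q.toMeasure.real C ≤ 1 := measureReal_le_one
    rw [if_pos ha, ENNReal.toReal_one, abs_of_nonneg (by linarith)]
    linarith
  · have h₁ : q.toMeasure.real C ≤ q.toMeasure.real {a}ᶜ :=
      measureReal_mono (Set.subset_compl_singleton_iff.2 ha)
    rw [probReal_compl_eq_one_sub (measurableSet_singleton a)] at h₁
    rwa [if_neg ha, ENNReal.toReal_zero, zero_sub, abs_neg, abs_of_nonneg measureReal_nonneg]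

theorem PMF.toReal_toMeasure_map {ι : Type*} (p : PMF ℕ) (e : ι ↪ ℕ) (S : Finset ι) :
    (p.toMeasure (↑(S.map e) : Set ℕ)).toReal = ∑ j ∈ S, (p (e j)).toReal := by
  rw [PMF.toMeasure_apply_finset, sum_map, ENNReal.toReal_sum fun _ _ => PMF.apply_ne_top _ _]

theorem sum_sub_le_tv {ι : Type*} (p q : PMF ℕ) (e : ι ↪ ℕ) (S : Finset ι) :
    ∑ j ∈ S, ((p (e j)).toReal - (q (e j)).toReal) ≤ tv p q := by
  rw [sum_sub_distrib, ← PMF.toReal_toMeasure_map, ← PMF.toReal_toMeasure_map]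
  exact (le_abs_self _).trans (abs_sub_le_tv p q _)

theorem sum_abs_sub_le_two_mul_tv {ι : Type*} [Fintype ι] (p q : PMF ℕ) (e : ι ↪ ℕ) :
    ∑ j, |(p (e j)).toReal - (q (e j)).toReal| ≤ 2 * tv p q := by
  rw [← sum_filter_add_sum_filter_not univ fun j => (q (e j)).toReal ≤ (p (e j)).toReal,
    two_mul]
  gcongr ?_ + ?_
  · calc _ = ∑ j ∈ univ.filter (fun j => (q (e j)).toReal ≤ (p (e j)).toReal),
            ((p (e j)).toReal - (q (e j)).toReal) :=
          sum_congr rfl fun j hj => abs_of_nonneg (sub_nonneg.2 (mem_filter.1 hj).2)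
      _ ≤ tv p q := sum_sub_le_tv p q e _
  · calc _ = ∑ j ∈ univ.filter (fun j => ¬(q (e j)).toReal ≤ (p (e j)).toReal),
            ((q (e j)).toReal - (p (e j)).toReal) :=
          sum_congr rfl fun j hj => abs_of_neg (sub_neg.2 (not_le.1 (mem_filter.1 hj).2)) ▸
            neg_sub _ _
      _ ≤ tv p q := tv_comm q p ▸ sum_sub_le_tv q p e _

theorem mixPMF_apply {η : ℝ} (hη₀ : 0 ≤ η) (hη₁ : η ≤ 1) {A : Finset ℕ} (hA : A.Nonempty)
    (h0 : 0 ∉ A) (x : ℕ) :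
    (mixPMF η A x).toReal = if x = 0 then 1 - η else if x ∈ A then η / #A else 0 := by
  have hmin : min η.toNNReal 1 = η.toNNReal := min_eq_left (Real.toNNReal_le_one.2 hη₁)
  rw [mixPMF, PMF.bind_apply, tsum_bool, dif_neg (by simp), dif_pos ⟨rfl, hA⟩]
  simp only [PMF.bernoulli_apply, cond_false, cond_true, hmin, PMF.pure_apply,
    PMF.uniformOfFinset_apply]
  split_ifs with hx hxA hxA
  · exact absurd (hx ▸ hxA) h0
  · simp [ENNReal.toReal_sub_of_le, Real.toNNReal_le_one.2 hη₁, hη₀]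
  · simp [hη₀, div_eq_mul_inv]
  · simp

def mixClass (η : ℝ) : Set (PMF ℕ) :=
  {q | ∃ A : Finset ℕ, A.Nonempty ∧ 0 ∉ A ∧ mixPMF η A = q}

theorem tv_pure_zero_le_of_mem_mixClass {η : ℝ} (hη₀ : 0 ≤ η) (hη₁ : η ≤ 1) {q : PMF ℕ}
    (hq : q ∈ mixClass η) : tv (PMF.pure 0) q ≤ η := by
  obtain ⟨A, hA, h0, rfl⟩ := hq
  simpa [mixPMF_apply hη₀ hη₁ hA h0] using tv_pure_le 0 (mixPMF η A)

theorem realizablePAC_singleton (p : PMF ℕ) :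
    RealizablePAC {p} (fun _ _ => p) (fun _ _ => 0) := by
  rintro ε δ hε - - - q rfl m -
  simp [tv_self, not_lt.2 hε.le]

theorem PMF.sum_toReal_eq_one {α : Type*} (q : PMF α) {B : Finset α}
    (hB : ∀ x ∉ B, q x = 0) : ∑ x ∈ B, (q x).toReal = 1 := by
  have hsum : ∑ x ∈ B, q x = 1 := (tsum_eq_sum hB).symm.trans q.tsum_coe
  rw [← ENNReal.toReal_sum fun _ _ => PMF.apply_ne_top _ _, hsum, ENNReal.toReal_one]

theorem Finset.sum_mul_le_add_sum_filter_lt {ι : Type*} (S : Finset ι) {w g : ι → ℝ} {ε : ℝ}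
    (hε : 0 ≤ ε) (hw : ∀ s ∈ S, 0 ≤ w s) (hw₁ : ∑ s ∈ S, w s ≤ 1) (hg : ∀ s ∈ S, g s ≤ 1) :
    ∑ s ∈ S, w s * g s ≤ ε + ∑ s ∈ S.filter (fun s => ε < g s), w s := by
  rw [← sum_filter_add_sum_filter_not S fun s => ε < g s]
  have hbad :
      ∑ s ∈ S.filter (fun s => ε < g s), w s * g s ≤ ∑ s ∈ S.filter (fun s => ε < g s), w s :=
    sum_le_sum fun s hs => mul_le_of_le_one_right (hw s (mem_filter.1 hs).1)
      (hg s (mem_filter.1 hs).1)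
  have hgood : ∑ s ∈ S.filter (fun s => ¬ε < g s), w s * g s ≤ ε :=
    calc ∑ s ∈ S.filter (fun s => ¬ε < g s), w s * g s
        ≤ ∑ s ∈ S.filter (fun s => ¬ε < g s), w s * ε :=
          sum_le_sum fun s hs => mul_le_mul_of_nonneg_left (not_lt.1 (mem_filter.1 hs).2)
            (hw s (mem_filter.1 hs).1)
      _ ≤ (∑ s ∈ S, w s) * ε := by
          rw [← sum_mul]
          exact mul_le_mul_of_nonneg_right
            (sum_le_sum_of_subset_of_nonneg (filter_subset _ _) fun s hs _ => hw s hs) hε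
      _ ≤ ε := mul_le_of_le_one_left hε hw₁
  linarith

section Sampling

variable {α : Type*} {m : ℕ}

noncomputable def sampleWeight (q : PMF α) (s : Fin m → α) : ℝ :=
  ∏ j, (q (s j)).toReal

theorem sampleWeight_nonneg (q : PMF α) (s : Fin m → α) : 0 ≤ sampleWeight q s :=
  prod_nonneg fun _ _ => ENNReal.toReal_nonneg

variable [MeasurableSpace α] [MeasurableSingletonClass α]

theorem sum_sampleWeight_le_iidSample (q : PMF α) {B : Finset (Fin m → α)}
    {E : Set (Fin m → α)} (hBE : ↑B ⊆ E) :
    ∑ s ∈ B, sampleWeight q s ≤ (iidSample q m E).toReal := by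
  have hsingleton : ∀ s, iidSample q m {s} = ∏ j, q (s j) := fun s => by
    rw [iidSample, ← Set.univ_pi_singleton s, Measure.pi_pi]
    exact prod_congr rfl fun j _ => q.toMeasure_apply_singleton _ (measurableSet_singleton _)
  have hfin : iidSample q m E ≠ ⊤ := by
    rw [iidSample]; exact measure_ne_top _ _
  calc ∑ s ∈ B, sampleWeight q s = (iidSample q m B).toReal := by
        rw [← sum_measure_singleton, ENNReal.toReal_sum fun _ _ => hsingleton _ ▸
          ENNReal.prod_ne_top fun j _ => PMF.apply_ne_top _ _]
        simp only [hsingleton, sampleWeight, ENNReal.toReal_prod]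
    _ ≤ (iidSample q m E).toReal := ENNReal.toReal_mono hfin (measure_mono hBE)

theorem sum_sampleWeight_le_one (q : PMF α) (B : Finset (Fin m → α)) :
    ∑ s ∈ B, sampleWeight q s ≤ 1 := by
  have h := sum_sampleWeight_le_iidSample q (Set.subset_univ (B : Set (Fin m → α)))
  rwa [iidSample, measure_univ, ENNReal.toReal_one] at h

end Sampling

namespace Assouad

variable {T m : ℕ} {η : ℝ}

def blockElt (i : ℕ) (b : Bool) : ℕ := 2 * i + 1 + b.toNat

theorem blockElt_injective₂ : Injective2 blockElt := by
  intro i j b c h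
  cases b <;> cases c <;> simp only [blockElt, Bool.toNat_false, Bool.toNat_true] at h <;>
    refine ⟨by omega, ?_⟩ <;> first | rfl | omega

theorem blockElt_ne_zero (i : ℕ) (b : Bool) : blockElt i b ≠ 0 := by
  simp [blockElt]

theorem blockElt_lt {i : ℕ} (hi : i < T) (b : Bool) : blockElt i b < 2 * T + 1 := by
  cases b <;> simp [blockElt] <;> omega

def blockEmb (T : ℕ) : Fin T × Bool ↪ ℕ :=
  ⟨fun ib => blockElt ib.1 ib.2, fun _ _ h =>
    Prod.ext (Fin.ext (blockElt_injective₂ h).1) (blockElt_injective₂ h).2⟩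

def block (i : Fin T) : Finset ℕ :=
  univ.map ⟨blockElt i, blockElt_injective₂.right i⟩

theorem mem_block {i : Fin T} {x : ℕ} : x ∈ block i ↔ ∃ b, blockElt i b = x := by
  simp only [block, Finset.mem_map, mem_univ, true_and]
  rfl

theorem block_subset_range (i : Fin T) : block i ⊆ range (2 * T + 1) := by
  intro x hx
  obtain ⟨b, rfl⟩ := mem_block.1 hx
  exact mem_range.2 (blockElt_lt i.2 b)

def hardSet (f : Fin T → Bool) : Finset ℕ :=
  univ.map (⟨fun i : Fin T => blockElt i (f i), fun _ _ h => Fin.ext (blockElt_injective₂ h).1⟩ :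
    Fin T ↪ ℕ)

theorem mem_hardSet {f : Fin T → Bool} {x : ℕ} :
    x ∈ hardSet f ↔ ∃ i : Fin T, blockElt i (f i) = x := by
  simp only [hardSet, Finset.mem_map, mem_univ, true_and]
  rfl

theorem blockElt_mem_hardSet_iff {f : Fin T → Bool} {i : Fin T} {b : Bool} :
    blockElt i b ∈ hardSet f ↔ f i = b := by
  refine mem_hardSet.trans ⟨fun ⟨j, hj⟩ => ?_, fun h => ⟨i, h ▸ rfl⟩⟩
  obtain ⟨hji, hb⟩ := blockElt_injective₂ hj
  rwa [Fin.ext hji] at hb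

theorem card_hardSet (f : Fin T → Bool) : #(hardSet f) = T := by
  simp [hardSet]

theorem zero_notMem_hardSet (f : Fin T → Bool) : 0 ∉ hardSet f := by
  simp [mem_hardSet, blockElt_ne_zero]

theorem hardSet_subset_range (f : Fin T → Bool) : hardSet f ⊆ range (2 * T + 1) := by
  intro x hx
  obtain ⟨i, rfl⟩ := mem_hardSet.1 hx
  exact mem_range.2 (blockElt_lt i.2 _)

theorem hardSet_nonempty (hT : 0 < T) (f : Fin T → Bool) : (hardSet f).Nonempty := by
  rw [← card_pos, card_hardSet]
  exact hT

noncomputable def hardPMF (η : ℝ) (f : Fin T → Bool) : PMF ℕ :=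
  mixPMF η (hardSet f)

theorem hardPMF_mem_mixClass (hT : 0 < T) (f : Fin T → Bool) : hardPMF η f ∈ mixClass η :=
  ⟨hardSet f, hardSet_nonempty hT f, zero_notMem_hardSet f, rfl⟩

theorem hardPMF_apply (hη₀ : 0 ≤ η) (hη₁ : η ≤ 1) (hT : 0 < T) (f : Fin T → Bool) (x : ℕ) :
    (hardPMF η f x).toReal = if x = 0 then 1 - η else if x ∈ hardSet f then η / T else 0 := by
  rw [hardPMF, mixPMF_apply hη₀ hη₁ (hardSet_nonempty hT f) (zero_notMem_hardSet f),
    card_hardSet]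

theorem hardPMF_blockElt (hη₀ : 0 ≤ η) (hη₁ : η ≤ 1) (f : Fin T → Bool) (i : Fin T) (b : Bool) :
    (hardPMF η f (blockElt i b)).toReal = if f i = b then η / T else 0 := by
  rw [hardPMF_apply hη₀ hη₁ (Fin.pos i), if_neg (blockElt_ne_zero _ _)]
  simp only [blockElt_mem_hardSet_iff]

theorem hardPMF_update_apply (hη₀ : 0 ≤ η) (hη₁ : η ≤ 1) (f : Fin T → Bool) (i : Fin T)
    (c : Bool) {x : ℕ} (hx : x ∉ block i) :
    (hardPMF η (update f i c) x).toReal = (hardPMF η f x).toReal := by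
  have hmem : x ∈ hardSet (update f i c) ↔ x ∈ hardSet f := by
    simp only [mem_hardSet]
    refine exists_congr fun j => ?_
    rcases eq_or_ne j i with rfl | hji
    · exact iff_of_false (fun h => hx (mem_block.2 ⟨_, h⟩)) fun h => hx (mem_block.2 ⟨_, h⟩)
    · rw [update_of_ne hji]
  rw [hardPMF_apply hη₀ hη₁ (Fin.pos i), hardPMF_apply hη₀ hη₁ (Fin.pos i)]
  simp only [hmem]

theorem sum_hardPMF_range (hη₀ : 0 ≤ η) (hη₁ : η ≤ 1) (hT : 0 < T) (f : Fin T → Bool) :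
    ∑ x ∈ range (2 * T + 1), (hardPMF η f x).toReal = 1 := by
  refine PMF.sum_toReal_eq_one _ fun x hx => ?_
  have hx₀ : x ≠ 0 := by rintro rfl; simp at hx
  have hxA : x ∉ hardSet f := fun h => hx (hardSet_subset_range f h)
  have h := hardPMF_apply hη₀ hη₁ hT f x
  rw [if_neg hx₀, if_neg hxA, ENNReal.toReal_eq_zero_iff] at h
  exact h.resolve_right (PMF.apply_ne_top _ _)

theorem sum_hardPMF_block (hη₀ : 0 ≤ η) (hη₁ : η ≤ 1) (f : Fin T → Bool) (i : Fin T) :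
    ∑ x ∈ block i, (hardPMF η f x).toReal = η / T := by
  rw [block, sum_map]
  simp [hardPMF_blockElt hη₀ hη₁]

def sampleSpace (T m : ℕ) : Finset (Fin m → ℕ) :=
  Fintype.piFinset fun _ => range (2 * T + 1)

def avoidingSamples (i : Fin T) (m : ℕ) : Finset (Fin m → ℕ) :=
  Fintype.piFinset fun _ => range (2 * T + 1) \ block i

theorem avoidingSamples_subset (i : Fin T) : avoidingSamples i m ⊆ sampleSpace T m :=
  Fintype.piFinset_subset _ _ fun _ => sdiff_subset

theorem sum_sampleWeight_avoidingSamples (hη₀ : 0 ≤ η) (hη₁ : η ≤ 1) (f : Fin T → Bool)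
    (i : Fin T) :
    ∑ s ∈ avoidingSamples i m, sampleWeight (hardPMF η f) s = (1 - η / T) ^ m := by
  simp only [sampleWeight, avoidingSamples]
  rw [← prod_univ_sum (fun _ => range (2 * T + 1) \ block i)
      fun _ x => (hardPMF η f x).toReal, sum_sdiff_eq_sub (block_subset_range i),
    sum_hardPMF_range hη₀ hη₁ (Fin.pos i), sum_hardPMF_block hη₀ hη₁]
  simp

theorem sampleWeight_update (hη₀ : 0 ≤ η) (hη₁ : η ≤ 1) (f : Fin T → Bool) (i : Fin T)
    (c : Bool) {s : Fin m → ℕ} (hs : s ∈ avoidingSamples i m) :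
    sampleWeight (hardPMF η (update f i c)) s = sampleWeight (hardPMF η f) s :=
  prod_congr rfl fun j _ =>
    hardPMF_update_apply hη₀ hη₁ f i c (mem_sdiff.1 (Fintype.mem_piFinset.1 hs j)).2

noncomputable def blockL1 (p q : PMF ℕ) (i : Fin T) : ℝ :=
  ∑ b, |(p (blockElt i b)).toReal - (q (blockElt i b)).toReal|

theorem blockL1_nonneg (p q : PMF ℕ) (i : Fin T) : 0 ≤ blockL1 p q i :=
  sum_nonneg fun _ _ => abs_nonneg _

theorem sum_blockL1_le_two_mul_tv (p q : PMF ℕ) : ∑ i : Fin T, blockL1 p q i ≤ 2 * tv p q :=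
  calc ∑ i : Fin T, blockL1 p q i
      = ∑ x : Fin T × Bool, |(p (blockEmb T x)).toReal - (q (blockEmb T x)).toReal| :=
        (Fintype.sum_prod_type' _).symm
    _ ≤ 2 * tv p q := sum_abs_sub_le_two_mul_tv p q (blockEmb T)

theorem two_mul_div_le_blockL1_add (hη₀ : 0 ≤ η) (hη₁ : η ≤ 1) (p : PMF ℕ)
    (f : Fin T → Bool) (i : Fin T) :
    2 * (η / T) ≤ blockL1 p (hardPMF η f) i + blockL1 p (hardPMF η (update f i (!f i))) i := by
  have hηT : 0 ≤ η / T := by positivity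
  calc 2 * (η / T)
      = ∑ b, |(hardPMF η f (blockElt i b)).toReal -
          (hardPMF η (update f i (!f i)) (blockElt i b)).toReal| := by
        simp only [hardPMF_blockElt hη₀ hη₁, update_self, Fintype.sum_bool]
        cases f i <;> simp [abs_of_nonneg hηT] <;> ring
    _ ≤ blockL1 p (hardPMF η f) i + blockL1 p (hardPMF η (update f i (!f i))) i := by
        rw [blockL1, blockL1, ← sum_add_distrib]
        exact sum_le_sum fun b _ => (abs_sub_le _ (p (blockElt i b)).toReal _).trans_eq
          (by rw [abs_sub_comm])

theorem sum_comp_update_not (i : Fin T) (F : (Fin T → Bool) → ℝ) :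
    ∑ f : Fin T → Bool, F (update f i (!f i)) = ∑ f : Fin T → Bool, F f := by
  have hinv : Involutive fun f : Fin T → Bool => update f i (!f i) := fun f => by simp
  exact Equiv.sum_comp hinv.toPerm F

theorem le_sum_sampleWeight_mul_blockL1 (hη₀ : 0 ≤ η) (hη₁ : η ≤ 1)
    (L : (Fin m → ℕ) → PMF ℕ) (i : Fin T) :
    2 ^ T * (1 - η / T) ^ m * (η / T) ≤
      ∑ f : Fin T → Bool, ∑ s ∈ avoidingSamples i m,
        sampleWeight (hardPMF η f) s * blockL1 (L s) (hardPMF η f) i := by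
  set G : (Fin T → Bool) → ℝ := fun f => ∑ s ∈ avoidingSamples i m,
    sampleWeight (hardPMF η f) s * blockL1 (L s) (hardPMF η f) i
  have hpair : ∀ f, (1 - η / T) ^ m * (2 * (η / T)) ≤ G f + G (update f i (!f i)) := fun f =>
    calc (1 - η / T) ^ m * (2 * (η / T))
        = ∑ s ∈ avoidingSamples i m, sampleWeight (hardPMF η f) s * (2 * (η / T)) := by
          rw [← sum_mul, sum_sampleWeight_avoidingSamples hη₀ hη₁]
      _ ≤ ∑ s ∈ avoidingSamples i m, sampleWeight (hardPMF η f) s *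
            (blockL1 (L s) (hardPMF η f) i + blockL1 (L s) (hardPMF η (update f i (!f i))) i) :=
          sum_le_sum fun s _ => mul_le_mul_of_nonneg_left
            (two_mul_div_le_blockL1_add hη₀ hη₁ _ f i) (sampleWeight_nonneg _ _)
      _ = G f + G (update f i (!f i)) := by
          simp only [G, mul_add, sum_add_distrib]
          congr 1
          exact sum_congr rfl fun s hs => by rw [sampleWeight_update hη₀ hη₁ f i _ hs]
  have hsum := sum_le_sum fun f (_ : f ∈ univ) => hpair f
  rw [sum_const, card_univ, Fintype.card_fun, Fintype.card_bool, Fintype.card_fin, nsmul_eq_mul,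
    sum_add_distrib, sum_comp_update_not i G] at hsum
  push_cast at hsum
  linarith

theorem le_sum_expected_tv (hη₀ : 0 ≤ η) (hη₁ : η ≤ 1) (hT : 0 < T)
    (L : (Fin m → ℕ) → PMF ℕ) :
    2 ^ T * (η * (1 - η / T) ^ m / 2) ≤
      ∑ f : Fin T → Bool, ∑ s ∈ sampleSpace T m,
        sampleWeight (hardPMF η f) s * tv (L s) (hardPMF η f) :=
  calc 2 ^ T * (η * (1 - η / T) ^ m / 2)
      = 1 / 2 * ∑ _i : Fin T, 2 ^ T * (1 - η / T) ^ m * (η / T) := by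
        rw [sum_const, card_univ, Fintype.card_fin, nsmul_eq_mul]
        field_simp
    _ ≤ 1 / 2 * ∑ i : Fin T, ∑ f : Fin T → Bool, ∑ s ∈ avoidingSamples i m,
          sampleWeight (hardPMF η f) s * blockL1 (L s) (hardPMF η f) i := by
        gcongr with i
        exact le_sum_sampleWeight_mul_blockL1 hη₀ hη₁ L i
    _ ≤ 1 / 2 * ∑ i : Fin T, ∑ f : Fin T → Bool, ∑ s ∈ sampleSpace T m,
          sampleWeight (hardPMF η f) s * blockL1 (L s) (hardPMF η f) i := by
        refine mul_le_mul_of_nonneg_left (sum_le_sum fun i _ => sum_le_sum fun f _ => ?_)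
          (by norm_num)
        exact sum_le_sum_of_subset_of_nonneg (avoidingSamples_subset i) fun s _ _ =>
          mul_nonneg (sampleWeight_nonneg _ _) (blockL1_nonneg _ _ _)
    _ = ∑ f : Fin T → Bool, ∑ s ∈ sampleSpace T m,
          sampleWeight (hardPMF η f) s * (1 / 2 * ∑ i : Fin T, blockL1 (L s) (hardPMF η f) i) := by
        simp only [mul_sum]
        rw [sum_comm]
        refine sum_congr rfl fun f _ => ?_
        rw [sum_comm]
        exact sum_congr rfl fun s _ => sum_congr rfl fun i _ => by ring
    _ ≤ ∑ f : Fin T → Bool, ∑ s ∈ sampleSpace T m,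
          sampleWeight (hardPMF η f) s * tv (L s) (hardPMF η f) := by
        refine sum_le_sum fun f _ => sum_le_sum fun s _ =>
          mul_le_mul_of_nonneg_left ?_ (sampleWeight_nonneg _ _)
        linarith [sum_blockL1_le_two_mul_tv (T := T) (L s) (hardPMF η f)]

theorem exists_hardPMF_failure_ge (hη₀ : 0 ≤ η) (hη₁ : η ≤ 1) (hT : 0 < T) {ε : ℝ}
    (hε : 0 ≤ ε) (L : (Fin m → ℕ) → PMF ℕ) :
    ∃ f : Fin T → Bool, η * (1 - η / T) ^ m / 2 - ε ≤
      (iidSample (hardPMF η f) m {S | ε < tv (L S) (hardPMF η f)}).toReal := by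
  have hsum := le_sum_expected_tv hη₀ hη₁ hT L
  have hconst :
      ∑ _f : Fin T → Bool, η * (1 - η / T) ^ m / 2 = 2 ^ T * (η * (1 - η / T) ^ m / 2) := by
    simp [sum_const, card_univ]
  rw [← hconst] at hsum
  obtain ⟨f, -, hf⟩ := exists_le_of_sum_le univ_nonempty hsum
  refine ⟨f, ?_⟩
  have hmarkov := (sampleSpace T m).sum_mul_le_add_sum_filter_lt hε
    (fun s _ => sampleWeight_nonneg (hardPMF η f) s) (sum_sampleWeight_le_one _ _)
    (fun s _ => tv_le_one (L s) (hardPMF η f))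
  have hfail := sum_sampleWeight_le_iidSample (hardPMF η f)
    (B := (sampleSpace T m).filter fun s => ε < tv (L s) (hardPMF η f))
    (E := {S | ε < tv (L S) (hardPMF η f)}) fun s hs => (mem_filter.1 hs).2
  linarith

end Assouad

theorem one_half_le_one_sub_div_pow {η : ℝ} (hη : η ≤ 1) (m : ℕ) :
    1 / 2 ≤ (1 - η / ((2 * m + 1 : ℕ) : ℝ)) ^ m := by
  have hT : (0 : ℝ) < 2 * m + 1 := by positivity
  have hx : η / (2 * m + 1) ≤ 1 := by rw [div_le_one hT]; linarith [m.cast_nonneg (α := ℝ)]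
  have hmx : m * (η / (2 * m + 1)) ≤ 1 / 2 := by
    rw [mul_div_assoc', div_le_iff₀ hT]
    nlinarith [m.cast_nonneg (α := ℝ)]
  have hbern := one_add_mul_le_pow (a := -(η / (2 * m + 1))) (by linarith) m
  rw [← sub_eq_add_neg] at hbern
  push_cast
  linarith

theorem not_realizablePAC_mixClass {η : ℝ} (hη₀ : 0 < η) (hη₁ : η ≤ 1) :
    ¬ ∃ L mQ, RealizablePAC (mixClass η) L mQ := by
  rintro ⟨L, mQ, hL⟩
  set m := mQ (η / 8) (η / 16)
  obtain ⟨f, hf⟩ := Assouad.exists_hardPMF_failure_ge hη₀.le hη₁ (T := 2 * m + 1)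
    (Nat.succ_pos _) (by positivity : 0 ≤ η / 8) (L m)
  have hfail := hL (η / 8) (η / 16) (by positivity) (by linarith) (by positivity) (by linarith) _
    (Assouad.hardPMF_mem_mixClass (Nat.succ_pos _) f) m le_rfl
  have hδ := ENNReal.toReal_le_of_le_ofReal (by positivity) hfail
  nlinarith [mul_le_mul_of_nonneg_left (one_half_le_one_sub_div_pow hη₁ m) hη₀.le]

/-- There is a countable family `H k` of classes of distributions over `ℕ`
such that `H₀ = {δ₀}` is learnable, no `H k` is PAC learnable in TV distance,
every `q ∈ H k` satisfies `tv δ₀ q ≤ 1/k` (so `{δ₀}` is a `1/k`-approximation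
of `H k`), and `1/k → 0`. -/
theorem exists_unlearnable_classes_approximated_by_point_mass :
    ∃ H : ℕ → Set (PMF ℕ),
      (∃ A mQ, RealizablePAC {PMF.pure 0} A mQ) ∧
      (∀ k : ℕ, 1 ≤ k → ¬ ∃ A mQ, RealizablePAC (H k) A mQ) ∧
      (∀ k : ℕ, 1 ≤ k → ∀ q ∈ H k, tv (PMF.pure 0) q ≤ 1 / (k : ℝ)) ∧
      Filter.Tendsto (fun k : ℕ => 1 / (k : ℝ)) Filter.atTop (nhds 0) := by
  have hk : ∀ k : ℕ, 1 ≤ k → 0 < 1 / (k : ℝ) ∧ 1 / (k : ℝ) ≤ 1 := fun k hk =>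
    ⟨one_div_pos.2 (Nat.cast_pos.2 hk), (div_le_one (Nat.cast_pos.2 hk)).2 (by exact_mod_cast hk)⟩
  exact ⟨fun k => mixClass (1 / k), ⟨_, _, realizablePAC_singleton _⟩,
    fun k hk₁ => not_realizablePAC_mixClass (hk k hk₁).1 (hk k hk₁).2,
    fun k hk₁ _ hq => tv_pure_zero_le_of_mem_mixClass (hk k hk₁).1.le (hk k hk₁).2 hq,
    tendsto_one_div_atTop_nhds_zero_nat⟩
end
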